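/- Fix ω ≠ 0 and γ > 0, and define the two-qubit Lindblad generator on 4×4 complex matrices (acting on ℂ² ⊗ ℂ²) by L(η) = −i(ω/2)([σ_z ⊗ I, η] + [I ⊗ σ_z, η]) + γ((σ_x ⊗ I) η (σ_x ⊗ I) − η) + γ((I ⊗ σ_x) η (I ⊗ σ_x) − η). Then the unique 4×4 matrix η with η positive semidefinite, Tr η = 1, and L(η) = 0 is the maximally mixed state η = (1/4) I₄ = (1/4) I ⊗ I, which is a separable state. -/

import Mathlib

/-!
Pair the stationarity equation `L η = 0` with `η` through `2 Re tr (ηᴴ ·)`. The Hamiltonian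
part `-i [H, η]` contributes nothing, while a unitary jump term `γ (U η Uᴴ - η)` contributes
`-γ ‖U η Uᴴ - η‖²`. Hence a stationary `η` is fixed by both `σ_x`-flips and commutes with
`σ_z ⊗ I + I ⊗ σ_z`. Commuting with this diagonal matrix kills the entries between different
total spins, and the flips carry every other off-diagonal entry to such an entry and join all
diagonal entries, so `η` is scalar; the trace makes the scalar `1/4`.
-/

open Matrix Kronecker Complex
open scoped ComplexOrder

noncomputable section

/-- The Pauli matrix `σ_x`. -/
def sigmaX : Matrix (Fin 2) (Fin 2) ℂ := !![0, 1; 1, 0]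

/-- The Pauli matrix `σ_z`. -/
def sigmaZ : Matrix (Fin 2) (Fin 2) ℂ := !![1, 0; 0, -1]

end

namespace Matrix

section Lindblad

variable {n : Type*} [Fintype n]

def twoReInner (A : Matrix n n ℂ) : Matrix n n ℂ →+ ℂ where
  toFun B := trace (Aᴴ * B) + trace (Bᴴ * A)
  map_zero' := by simp
  map_add' B C := by
    simp only [conjTranspose_add, Matrix.mul_add, Matrix.add_mul, trace_add]
    ring

theorem twoReInner_apply (A B : Matrix n n ℂ) :
    twoReInner A B = trace (Aᴴ * B) + trace (Bᴴ * A) := rfl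

theorem twoReInner_ofReal_smul (A B : Matrix n n ℂ) (r : ℝ) :
    twoReInner A ((r : ℂ) • B) = r * twoReInner A B := by
  simp only [twoReInner_apply, conjTranspose_smul, Matrix.mul_smul, Matrix.smul_mul, trace_smul,
    smul_eq_mul, star_def, conj_ofReal]
  ring

theorem twoReInner_commutator {H : Matrix n n ℂ} (hH : H.IsHermitian) (c : ℝ)
    (η : Matrix n n ℂ) : twoReInner η ((-I * c) • (H * η - η * H)) = 0 := by
  have hcycle : trace (H * (ηᴴ * η)) = trace (ηᴴ * (η * H)) := by
    rw [trace_mul_comm, Matrix.mul_assoc]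
  simp only [twoReInner_apply, conjTranspose_smul, conjTranspose_sub, conjTranspose_mul, hH.eq,
    Matrix.mul_smul, Matrix.smul_mul, trace_smul, Matrix.mul_sub, Matrix.sub_mul, trace_sub,
    smul_eq_mul, Matrix.mul_assoc, star_mul', star_neg, star_def, conj_I, conj_ofReal]
  linear_combination (-I * c) * hcycle

theorem twoReInner_conj_sub [DecidableEq n] {U : Matrix n n ℂ} (hU : Uᴴ * U = 1)
    (η : Matrix n n ℂ) :
    twoReInner η (U * η * Uᴴ - η) = -trace ((U * η * Uᴴ - η)ᴴ * (U * η * Uᴴ - η)) := by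
  have hnorm : trace (U * (ηᴴ * (Uᴴ * (U * (η * Uᴴ))))) = trace (ηᴴ * η) := by
    rw [← Matrix.mul_assoc Uᴴ, hU, Matrix.one_mul, trace_mul_comm, Matrix.mul_assoc,
      Matrix.mul_assoc, hU, Matrix.mul_one]
  simp only [twoReInner_apply, conjTranspose_sub, conjTranspose_mul, conjTranspose_conjTranspose,
    Matrix.mul_sub, Matrix.sub_mul, trace_sub, Matrix.mul_assoc]
  linear_combination hnorm

theorem conj_eq_and_commute_of_lindblad_eq_zero [DecidableEq n] {ι : Type*} [Fintype ι]
    {H : Matrix n n ℂ} (hH : H.IsHermitian) {U : ι → Matrix n n ℂ}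
    (hU : ∀ i, U i ∈ unitary (Matrix n n ℂ)) {c : ℝ} (hc : c ≠ 0) {γ : ι → ℝ}
    (hγ : ∀ i, 0 < γ i) {η : Matrix n n ℂ}
    (h : (-I * c) • (H * η - η * H) + ∑ i, (γ i : ℂ) • (U i * η * (U i)ᴴ - η) = 0) :
    (∀ i, U i * η * (U i)ᴴ = η) ∧ Commute H η := by
  have hdissipation :
      ∑ i, (γ i : ℂ) * trace ((U i * η * (U i)ᴴ - η)ᴴ * (U i * η * (U i)ᴴ - η)) = 0 := by
    simpa only [map_add, map_sum, twoReInner_ofReal_smul, twoReInner_commutator hH,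
      twoReInner_conj_sub (Unitary.star_mul_self_of_mem (hU _)), map_zero, zero_add, mul_neg,
      Finset.sum_neg_distrib, neg_eq_zero] using congrArg (twoReInner η) h
  have hjump : ∀ i, U i * η * (U i)ᴴ - η = 0 := by
    intro i
    have hnonneg : ∀ j ∈ Finset.univ,
        0 ≤ (γ j : ℂ) * trace ((U j * η * (U j)ᴴ - η)ᴴ * (U j * η * (U j)ᴴ - η)) := fun j _ =>
      mul_nonneg (by exact_mod_cast (hγ j).le) (posSemidef_conjTranspose_mul_self _).trace_nonneg
    have hi := (Finset.sum_eq_zero_iff_of_nonneg hnonneg).1 hdissipation i (Finset.mem_univ i)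
    exact trace_conjTranspose_mul_self_eq_zero_iff.1 <|
      (mul_eq_zero.1 hi).resolve_left (by exact_mod_cast (hγ i).ne')
  refine ⟨fun i => sub_eq_zero.1 (hjump i), ?_⟩
  rw [Finset.sum_eq_zero fun i _ => by rw [hjump i, smul_zero], add_zero, smul_eq_zero,
    sub_eq_zero] at h
  exact h.resolve_left (by simp [hc])

end Lindblad

theorem apply_eq_zero_of_commute_diagonal {n α : Type*} [Fintype n] [DecidableEq n]
    [CommRing α] [IsDomain α] {d : n → α} {A : Matrix n n α} (h : Commute (diagonal d) A)
    {i j : n} (hij : d i ≠ d j) : A i j = 0 := by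
  have hij' := congrFun₂ h.eq i j
  rw [diagonal_mul, mul_diagonal] at hij'
  exact (mul_eq_zero.1 (by linear_combination hij' : (d i - d j) * A i j = 0)).resolve_left
    (sub_ne_zero.2 hij)

theorem smul_one_kronecker_smul_one {m n α : Type*} [DecidableEq m] [DecidableEq n]
    [CommSemiring α] (a b : α) :
    (a • (1 : Matrix m m α)) ⊗ₖ (b • (1 : Matrix n n α)) = (a * b) • 1 := by
  rw [smul_kronecker, kronecker_smul, one_kronecker_one, smul_smul]

end Matrix

theorem PEquiv.toMatrix_toPEquiv_kronecker {l m n p α : Type*} [DecidableEq m] [DecidableEq p]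
    [MulZeroOneClass α] (σ : l ≃ m) (τ : n ≃ p) :
    (σ.toPEquiv.toMatrix ⊗ₖ τ.toPEquiv.toMatrix : Matrix _ _ α)
      = (σ.prodCongr τ).toPEquiv.toMatrix := by
  ext ⟨a, b⟩ ⟨c, d⟩
  simp only [kroneckerMap_apply, PEquiv.toMatrix_apply, Equiv.toPEquiv_apply, Option.mem_def,
    Option.some.injEq, Equiv.prodCongr_apply, Prod.map, Prod.mk.injEq]
  split_ifs <;> simp_all

theorem PEquiv.toMatrix_toPEquiv_mul_mul_toMatrix_toPEquiv {m n α : Type*} [Fintype m]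
    [DecidableEq m] [Fintype n] [DecidableEq n] [NonAssocSemiring α] (σ : m ≃ n) (τ : n ≃ m)
    (M : Matrix n n α) :
    (σ.toPEquiv.toMatrix : Matrix m n α) * M * (τ.toPEquiv.toMatrix : Matrix n m α)
      = M.submatrix σ τ.symm := by
  rw [PEquiv.toMatrix_toPEquiv_mul, PEquiv.mul_toMatrix_toPEquiv, submatrix_submatrix]
  rfl

theorem sigmaX_isHermitian : sigmaX.IsHermitian := by
  ext i j
  fin_cases i <;> fin_cases j <;> simp [sigmaX]

theorem sigmaX_mul_self : sigmaX * sigmaX = 1 := by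
  simp [sigmaX, ← Matrix.one_fin_two]

theorem sigmaX_mem_unitary : sigmaX ∈ unitary (Matrix (Fin 2) (Fin 2) ℂ) := by
  rw [Unitary.mem_iff, star_eq_conjTranspose, sigmaX_isHermitian.eq, sigmaX_mul_self]
  exact ⟨rfl, rfl⟩

theorem sigmaX_eq_toMatrix_swap : sigmaX = (Equiv.swap (0 : Fin 2) 1).toPEquiv.toMatrix := by
  ext i j
  fin_cases i <;> fin_cases j <;> simp [sigmaX, PEquiv.toMatrix_apply]

theorem sigmaX_kronecker_one_eq_toMatrix :
    sigmaX ⊗ₖ (1 : Matrix (Fin 2) (Fin 2) ℂ)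
      = ((Equiv.swap 0 1).prodCongr (Equiv.refl (Fin 2))).toPEquiv.toMatrix := by
  rw [sigmaX_eq_toMatrix_swap, ← PEquiv.toMatrix_refl, ← Equiv.toPEquiv_refl,
    PEquiv.toMatrix_toPEquiv_kronecker]

theorem one_kronecker_sigmaX_eq_toMatrix :
    (1 : Matrix (Fin 2) (Fin 2) ℂ) ⊗ₖ sigmaX
      = ((Equiv.refl (Fin 2)).prodCongr (Equiv.swap 0 1)).toPEquiv.toMatrix := by
  rw [sigmaX_eq_toMatrix_swap, ← PEquiv.toMatrix_refl, ← Equiv.toPEquiv_refl,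
    PEquiv.toMatrix_toPEquiv_kronecker]

theorem sigmaZ_eq_diagonal : sigmaZ = diagonal ![1, -1] := by
  ext i j
  fin_cases i <;> fin_cases j <;> simp [sigmaZ]

theorem sigmaZ_kronecker_one_add_one_kronecker_sigmaZ_eq_diagonal :
    sigmaZ ⊗ₖ (1 : Matrix (Fin 2) (Fin 2) ℂ) + 1 ⊗ₖ sigmaZ
      = diagonal fun x => ![1, -1] x.1 + ![1, -1] x.2 := by
  rw [sigmaZ_eq_diagonal, ← diagonal_one, diagonal_kronecker_diagonal,
    diagonal_kronecker_diagonal, diagonal_add]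
  simp

theorem eq_smul_one_of_commute_pauli {η : Matrix (Fin 2 × Fin 2) (Fin 2 × Fin 2) ℂ}
    (hX₁ : (sigmaX ⊗ₖ 1) * η * (sigmaX ⊗ₖ 1)ᴴ = η)
    (hX₂ : (1 ⊗ₖ sigmaX) * η * (1 ⊗ₖ sigmaX)ᴴ = η)
    (hZ : Commute (sigmaZ ⊗ₖ 1 + 1 ⊗ₖ sigmaZ) η) :
    η = η (0, 0) (0, 0) • 1 := by
  rw [conjTranspose_kronecker, sigmaX_isHermitian.eq, conjTranspose_one,
    sigmaX_kronecker_one_eq_toMatrix, PEquiv.toMatrix_toPEquiv_mul_mul_toMatrix_toPEquiv] at hX₁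
  rw [conjTranspose_kronecker, sigmaX_isHermitian.eq, conjTranspose_one,
    one_kronecker_sigmaX_eq_toMatrix, PEquiv.toMatrix_toPEquiv_mul_mul_toMatrix_toPEquiv] at hX₂
  rw [sigmaZ_kronecker_one_add_one_kronecker_sigmaZ_eq_diagonal] at hZ
  have h₁ := congrFun₂ hX₁
  have h₂ := congrFun₂ hX₂
  have h₃ := fun x y => apply_eq_zero_of_commute_diagonal hZ (i := x) (j := y)
  simp only [submatrix_apply, Equiv.prodCongr_symm, Equiv.symm_swap, Equiv.refl_symm] at h₁ h₂
  ext ⟨i, j⟩ ⟨k, l⟩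
  fin_cases i <;> fin_cases j <;> fin_cases k <;> fin_cases l <;> simp
  all_goals first
    | (apply h₃; norm_num; done)
    | (rw [← h₁]; apply h₃; norm_num)
    | (rw [← h₁]; rfl)
    | (rw [← h₂]; rfl)
    | (rw [← h₁, ← h₂]; rfl)

/-- For `ω ≠ 0` and `γ > 0`, the unique state (positive semidefinite
`4×4` matrix of trace one) annihilated by the two-qubit Lindblad generator
`L(η) = −i(ω/2)([σ_z⊗I, η] + [I⊗σ_z, η]) + γ((σ_x⊗I) η (σ_x⊗I) − η) + γ((I⊗σ_x) η (I⊗σ_x) − η)`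
is the maximally mixed state `η = I₄/4 = (I/2) ⊗ (I/2)`, which is a separable
(product) state. -/
theorem two_qubit_lindblad_unique_stationary_state_separable
    (ω γ : ℝ) (hω : ω ≠ 0) (hγ : 0 < γ)
    (L : Matrix (Fin 2 × Fin 2) (Fin 2 × Fin 2) ℂ → Matrix (Fin 2 × Fin 2) (Fin 2 × Fin 2) ℂ)
    (hL : ∀ η, L η =
        (-Complex.I * ((ω : ℂ) / 2)) •
          (((sigmaZ ⊗ₖ (1 : Matrix (Fin 2) (Fin 2) ℂ)) * η
              - η * (sigmaZ ⊗ₖ (1 : Matrix (Fin 2) (Fin 2) ℂ)))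
            + (((1 : Matrix (Fin 2) (Fin 2) ℂ) ⊗ₖ sigmaZ) * η
              - η * ((1 : Matrix (Fin 2) (Fin 2) ℂ) ⊗ₖ sigmaZ)))
        + (γ : ℂ) • ((sigmaX ⊗ₖ (1 : Matrix (Fin 2) (Fin 2) ℂ)) * η
            * (sigmaX ⊗ₖ (1 : Matrix (Fin 2) (Fin 2) ℂ)) - η)
        + (γ : ℂ) • (((1 : Matrix (Fin 2) (Fin 2) ℂ) ⊗ₖ sigmaX) * η
            * ((1 : Matrix (Fin 2) (Fin 2) ℂ) ⊗ₖ sigmaX) - η)) :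
    (∀ η : Matrix (Fin 2 × Fin 2) (Fin 2 × Fin 2) ℂ,
      (η.PosSemidef ∧ η.trace = 1 ∧ L η = 0) ↔
        η = (4 : ℂ)⁻¹ • (1 : Matrix (Fin 2 × Fin 2) (Fin 2 × Fin 2) ℂ)) ∧
    (4 : ℂ)⁻¹ • (1 : Matrix (Fin 2 × Fin 2) (Fin 2 × Fin 2) ℂ)
      = ((2 : ℂ)⁻¹ • (1 : Matrix (Fin 2) (Fin 2) ℂ)) ⊗ₖ
          ((2 : ℂ)⁻¹ • (1 : Matrix (Fin 2) (Fin 2) ℂ)) ∧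
    ∃ ρ₁ ρ₂ : Matrix (Fin 2) (Fin 2) ℂ,
      ρ₁.PosSemidef ∧ ρ₁.trace = 1 ∧ ρ₂.PosSemidef ∧ ρ₂.trace = 1 ∧
        (4 : ℂ)⁻¹ • (1 : Matrix (Fin 2 × Fin 2) (Fin 2 × Fin 2) ℂ) = ρ₁ ⊗ₖ ρ₂ := by
  have hH : (sigmaZ ⊗ₖ (1 : Matrix (Fin 2) (Fin 2) ℂ) + 1 ⊗ₖ sigmaZ).IsHermitian := by
    rw [sigmaZ_kronecker_one_add_one_kronecker_sigmaZ_eq_diagonal]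
    exact isHermitian_diagonal_of_self_adjoint _ (by ext x; fin_cases x <;> simp)
  have hU : ∀ i, ![sigmaX ⊗ₖ (1 : Matrix (Fin 2) (Fin 2) ℂ), 1 ⊗ₖ sigmaX] i ∈ unitary _ := by
    intro i
    fin_cases i
    · exact kronecker_mem_unitary sigmaX_mem_unitary (one_mem _)
    · exact kronecker_mem_unitary (one_mem _) sigmaX_mem_unitary
  have hsplit : (4 : ℂ)⁻¹ • (1 : Matrix (Fin 2 × Fin 2) (Fin 2 × Fin 2) ℂ)
      = ((2 : ℂ)⁻¹ • (1 : Matrix (Fin 2) (Fin 2) ℂ)) ⊗ₖ ((2 : ℂ)⁻¹ • 1) := by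
    rw [smul_one_kronecker_smul_one]
    norm_num
  have hhalf : ((2 : ℂ)⁻¹ • (1 : Matrix (Fin 2) (Fin 2) ℂ)).PosSemidef :=
    PosSemidef.one.smul (by norm_num [Complex.le_def])
  refine ⟨fun η => ⟨fun ⟨_, htr, hη⟩ => ?_, fun hη => ?_⟩, hsplit,
    _, _, hhalf, by simp [trace_smul], hhalf, by simp [trace_smul], hsplit⟩
  · obtain ⟨hX, hZ⟩ := conj_eq_and_commute_of_lindblad_eq_zero hH hU (c := ω / 2)
      (by simpa using hω) (γ := fun _ => γ) (fun _ => hγ) (η := η) (by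
        rw [← hη, hL]
        simp only [Fin.sum_univ_two, Matrix.cons_val_zero, Matrix.cons_val_one,
          conjTranspose_kronecker, sigmaX_isHermitian.eq, conjTranspose_one, Matrix.add_mul,
          Matrix.mul_add]
        push_cast
        module)
    rw [eq_smul_one_of_commute_pauli (hX 0) (hX 1) hZ] at htr ⊢
    simp only [trace_smul, trace_one, Fintype.card_prod, Fintype.card_fin, Nat.reduceMul,
      Nat.cast_ofNat, smul_eq_mul] at htr
    rw [eq_inv_of_mul_eq_one_left htr]
  · subst hη
    refine ⟨PosSemidef.one.smul (by norm_num [Complex.le_def]), by simp [trace_smul], ?_⟩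
    rw [hL]
    simp [← mul_kronecker_mul, sigmaX_mul_self]
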